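/- Let Y = Xθ* + ε with support S* of size K, let λ > 0, and suppose κ(S*,3) ≥ κ* > 0 and ‖(1/T)Xᵀε‖_∞ ≤ λ/2. Let θ̂ be any Lasso minimizer with parameter λ. Let Z ⊆ {0,1}^m be a nonempty finite set (of indicator vectors of feasible coalition structures), let z* ∈ Z maximize z ↦ zᵀθ* over Z, and let ẑ ∈ Z maximize z ↦ zᵀθ̂ over Z. Then the welfare gap satisfies (z*)ᵀθ* − ẑᵀθ* ≤ 2‖θ̂ − θ*‖₁ ≤ 48 λ K / κ*². -/

import Mathlib

/-!
The welfare gap is controlled by the ℓ¹ error: since `ẑ` is optimal for `θ̂`,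
`z*ᵀθ* - ẑᵀθ* ≤ z*ᵀ(θ* - θ̂) + ẑᵀ(θ̂ - θ*)`, and `|zᵀu| ≤ ‖u‖₁` for every `0/1` vector `z`.

The ℓ¹ error `u = θ̂ - θ*` of the Lasso is bounded by the standard argument. Comparing the
objective at `θ̂` and at `θ*` and bounding the noise term by `λ/2 ‖u‖₁` gives
`(1/2T) ‖Xu‖² ≤ 3λ/2 ‖u_S‖₁ - λ/2 ‖u_Sᶜ‖₁`. So `u` lies in the cone of the restricted eigenvalue
condition, which turns this into `κ² ‖u_S‖₂² ≤ 3λ ‖u_S‖₁`; Cauchy–Schwarz `‖u_S‖₁² ≤ K ‖u_S‖₂²`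
then gives `‖u_S‖₁ ≤ 3λK/κ²`, and `‖u‖₁ ≤ 4 ‖u_S‖₁`.
-/

open Finset Matrix

section Welfare

variable {ι : Type*} [Fintype ι]

theorem abs_sum_mul_le_sum_abs {z u : ι → ℝ} (hz : ∀ j, |z j| ≤ 1) :
    |∑ j, z j * u j| ≤ ∑ j, |u j| :=
  (abs_sum_le_sum_abs _ _).trans <| sum_le_sum fun j _ => by
    rw [abs_mul]
    exact mul_le_of_le_one_left (abs_nonneg _) (hz j)

theorem welfare_gap_le_two_mul_sum_abs_sub {z z' θ θ' : ι → ℝ}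
    (hz : ∀ j, |z j| ≤ 1) (hz' : ∀ j, |z' j| ≤ 1)
    (hopt : ∑ j, z j * θ' j ≤ ∑ j, z' j * θ' j) :
    ∑ j, z j * θ j - ∑ j, z' j * θ j ≤ 2 * ∑ j, |θ' j - θ j| := by
  have hdiff (y : ι → ℝ) :
      ∑ j, y j * θ' j - ∑ j, y j * θ j = ∑ j, y j * (θ' j - θ j) := by
    simp only [mul_sub, sum_sub_distrib]
  have h := abs_le.mp (abs_sum_mul_le_sum_abs (u := fun j => θ' j - θ j) hz)
  have h' := abs_le.mp (abs_sum_mul_le_sum_abs (u := fun j => θ' j - θ j) hz')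
  linarith [hdiff z, hdiff z']

end Welfare

theorem dotProduct_le_mul_sum_abs {ι : Type*} [Fintype ι] {g u : ι → ℝ} {b : ℝ}
    (hg : ∀ j, |g j| ≤ b) : g ⬝ᵥ u ≤ b * ∑ j, |u j| := by
  rw [mul_sum]
  refine sum_le_sum fun j _ => (le_abs_self _).trans ?_
  rw [abs_mul]
  exact mul_le_mul_of_nonneg_right (hg j) (abs_nonneg _)

theorem sum_abs_sub_sum_abs_le_of_support_subset {ι : Type*} [Fintype ι] [DecidableEq ι]
    {S : Finset ι} {θ θ' : ι → ℝ} (hθ : ∀ j ∉ S, θ j = 0) :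
    ∑ j, |θ j| - ∑ j, |θ' j| ≤ ∑ j ∈ S, |θ' j - θ j| - ∑ j ∈ Sᶜ, |θ' j - θ j| := by
  rw [← sum_add_sum_compl S (fun j => |θ j|), ← sum_add_sum_compl S (fun j => |θ' j|)]
  have hoff : ∑ j ∈ Sᶜ, |θ j| = 0 :=
    sum_eq_zero fun j hj => by rw [hθ j (mem_compl.mp hj), abs_zero]
  have hoff' : ∑ j ∈ Sᶜ, |θ' j - θ j| = ∑ j ∈ Sᶜ, |θ' j| :=
    sum_congr rfl fun j hj => by rw [hθ j (mem_compl.mp hj), sub_zero]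
  have hon : ∑ j ∈ S, |θ j| - ∑ j ∈ S, |θ' j| ≤ ∑ j ∈ S, |θ' j - θ j| := by
    rw [← sum_sub_distrib]
    exact sum_le_sum fun j _ => abs_sub_comm (θ j) (θ' j) ▸ abs_sub_abs_le_abs_sub (θ j) (θ' j)
  linarith

section Lasso

variable {τ ι : Type*} [Fintype τ] [Fintype ι]

noncomputable def lassoObjective (T lam : ℝ) (X : Matrix τ ι ℝ) (Y : τ → ℝ) (θ : ι → ℝ) : ℝ :=
  1 / (2 * T) * ∑ t, (Y t - (X *ᵥ θ) t) ^ 2 + lam * ∑ j, |θ j|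

/-- `κ(S, α) ≥ κ` for the restricted eigenvalue constant `κ(S, α)` of the design `X` with `T`
rows, cleared of denominators. -/
def HasRestrictedEigenvalue [DecidableEq ι] (X : Matrix τ ι ℝ) (T : ℝ) (S : Finset ι) (α κ : ℝ) :
    Prop :=
  ∀ u : ι → ℝ, ∑ j ∈ Sᶜ, |u j| ≤ α * ∑ j ∈ S, |u j| →
    κ * √T * √(∑ j ∈ S, u j ^ 2) ≤ √(∑ t, (X *ᵥ u) t ^ 2)

theorem HasRestrictedEigenvalue.sq_mul_sum_sq_le [DecidableEq ι] {X : Matrix τ ι ℝ} {T α κ : ℝ}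
    {S : Finset ι} (h : HasRestrictedEigenvalue X T S α κ) (hκ : 0 ≤ κ) (hT : 0 ≤ T) {u : ι → ℝ}
    (hu : ∑ j ∈ Sᶜ, |u j| ≤ α * ∑ j ∈ S, |u j|) :
    κ ^ 2 * T * ∑ j ∈ S, u j ^ 2 ≤ ∑ t, (X *ᵥ u) t ^ 2 := by
  have hsq := pow_le_pow_left₀ (by positivity) (h u hu) 2
  have hS : 0 ≤ ∑ j ∈ S, u j ^ 2 := by positivity
  have hXu : 0 ≤ ∑ t, (X *ᵥ u) t ^ 2 := by positivity
  rwa [mul_pow, mul_pow, Real.sq_sqrt hT, Real.sq_sqrt hS, Real.sq_sqrt hXu] at hsq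

variable {T lam : ℝ} {X : Matrix τ ι ℝ} {Y ε : τ → ℝ} {θ θ' : ι → ℝ}

theorem lasso_basic_inequality (hY : Y = X *ᵥ θ + ε)
    (hmin : lassoObjective T lam X Y θ' ≤ lassoObjective T lam X Y θ) :
    1 / (2 * T) * ∑ t, (X *ᵥ (θ' - θ)) t ^ 2
      ≤ 1 / T * (ε ⬝ᵥ X *ᵥ (θ' - θ)) + lam * (∑ j, |θ j| - ∑ j, |θ' j|) := by
  set v := X *ᵥ (θ' - θ)
  have hres (t : τ) : Y t - (X *ᵥ θ') t = ε t - v t := by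
    simp only [v, hY, mulVec_sub, Pi.add_apply, Pi.sub_apply]
    ring
  have hres₀ (t : τ) : Y t - (X *ᵥ θ) t = ε t := by
    simp only [hY, Pi.add_apply]
    ring
  have hexp : ∑ t, (ε t - v t) ^ 2 = ∑ t, ε t ^ 2 - 2 * (ε ⬝ᵥ v) + ∑ t, v t ^ 2 := by
    simp only [dotProduct, sub_sq, sum_add_distrib, sum_sub_distrib, mul_sum, mul_assoc]
  simp only [lassoObjective, hres, hres₀, hexp] at hmin
  linear_combination hmin

theorem noise_term_le {c : ℝ} (hnoise : ∀ j, |1 / T * (Xᵀ *ᵥ ε) j| ≤ c) (u : ι → ℝ) :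
    1 / T * (ε ⬝ᵥ X *ᵥ u) ≤ c * ∑ j, |u j| := by
  have hdual : 1 / T * (ε ⬝ᵥ X *ᵥ u) = ((1 / T) • (Xᵀ *ᵥ ε)) ⬝ᵥ u := by
    rw [smul_dotProduct, mulVec_transpose, ← dotProduct_mulVec, smul_eq_mul]
  exact hdual ▸ dotProduct_le_mul_sum_abs hnoise

theorem lasso_prediction_error_le [DecidableEq ι] {S : Finset ι} (hlam : 0 ≤ lam)
    (hY : Y = X *ᵥ θ + ε) (hθ : ∀ j ∉ S, θ j = 0)
    (hnoise : ∀ j, |1 / T * (Xᵀ *ᵥ ε) j| ≤ lam / 2)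
    (hmin : lassoObjective T lam X Y θ' ≤ lassoObjective T lam X Y θ) :
    1 / (2 * T) * ∑ t, (X *ᵥ (θ' - θ)) t ^ 2
      ≤ 3 * lam / 2 * ∑ j ∈ S, |θ' j - θ j| - lam / 2 * ∑ j ∈ Sᶜ, |θ' j - θ j| := by
  have hbasic := lasso_basic_inequality hY hmin
  have hnoise_term := noise_term_le hnoise (θ' - θ)
  have hdecomp := mul_le_mul_of_nonneg_left (sum_abs_sub_sum_abs_le_of_support_subset
    (θ' := θ') hθ) hlam
  simp only [Pi.sub_apply, ← sum_add_sum_compl S] at hnoise_term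
  linarith

theorem lasso_sum_abs_sub_le [DecidableEq ι] {S : Finset ι} {κ : ℝ} (hT : 0 < T)
    (hlam : 0 < lam) (hκ : 0 < κ) (hRE : HasRestrictedEigenvalue X T S 3 κ)
    (hY : Y = X *ᵥ θ + ε) (hθ : ∀ j ∉ S, θ j = 0)
    (hnoise : ∀ j, |1 / T * (Xᵀ *ᵥ ε) j| ≤ lam / 2)
    (hmin : lassoObjective T lam X Y θ' ≤ lassoObjective T lam X Y θ) :
    ∑ j, |θ' j - θ j| ≤ 12 * lam * #S / κ ^ 2 := by
  set A := ∑ j ∈ S, |θ' j - θ j|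
  set B := ∑ j ∈ Sᶜ, |θ' j - θ j|
  set s := ∑ j ∈ S, (θ' j - θ j) ^ 2
  have hpred := lasso_prediction_error_le hlam.le hY hθ hnoise hmin
  have hpred_nonneg : 0 ≤ 1 / (2 * T) * ∑ t, (X *ᵥ (θ' - θ)) t ^ 2 := by positivity
  have hcone : B ≤ 3 * A := by nlinarith
  have hRE_u : κ ^ 2 * T * s ≤ ∑ t, (X *ᵥ (θ' - θ)) t ^ 2 :=
    hRE.sq_mul_sum_sq_le hκ.le hT.le hcone
  have hs : κ ^ 2 * s ≤ 3 * lam * A := by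
    have := mul_le_mul_of_nonneg_left hRE_u (by positivity : 0 ≤ 1 / (2 * T))
    rw [show 1 / (2 * T) * (κ ^ 2 * T * s) = κ ^ 2 * s / 2 by field_simp] at this
    have hB : 0 ≤ B := by positivity
    nlinarith
  have hCS : A ^ 2 ≤ #S * s := by
    simpa only [sq_abs] using sq_sum_le_card_mul_sum_sq (s := S) (f := fun j => |θ' j - θ j|)
  have hA : κ ^ 2 * A ≤ 3 * lam * #S := by
    rcases (show 0 ≤ A by positivity).eq_or_lt with hA0 | hApos
    · rw [← hA0, mul_zero]
      positivity
    · refine le_of_mul_le_mul_right ?_ hApos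
      nlinarith
  rw [← sum_add_sum_compl S, le_div_iff₀ (by positivity)]
  nlinarith

end Lasso

theorem stmt16_general
    (T m K : ℕ) (hT : 0 < T)
    (X : Matrix (Fin T) (Fin m) ℝ)
    (θstar : Fin m → ℝ) (ε Y : Fin T → ℝ)
    (hY : ∀ t, Y t = (∑ j, X t j * θstar j) + ε t)
    (Sstar : Finset (Fin m)) (hSstar : ∀ j, j ∈ Sstar ↔ θstar j ≠ 0)
    (hcard : Sstar.card = K)
    (lam : ℝ) (hlam : 0 < lam)
    (κstar : ℝ) (hκ : 0 < κstar)
    -- restricted eigenvalue condition `κ(S*, 3) ≥ κ*`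
    (hRE : ∀ u : Fin m → ℝ,
      (∑ j ∈ Sstarᶜ, |u j|) ≤ 3 * ∑ j ∈ Sstar, |u j| →
      κstar * Real.sqrt (T : ℝ) * Real.sqrt (∑ j ∈ Sstar, u j ^ 2)
        ≤ Real.sqrt (∑ t, (∑ j, X t j * u j) ^ 2))
    -- noise condition `‖(1/T) Xᵀε‖_∞ ≤ λ/2`
    (hnoise : ∀ j, |(1 / (T : ℝ)) * ∑ t, X t j * ε t| ≤ lam / 2)
    (θhat : Fin m → ℝ)
    -- `θhat` is a minimizer of the Lasso objective
    (hmin : ∀ θ : Fin m → ℝ,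
      (1 / (2 * (T : ℝ))) * (∑ t, (Y t - ∑ j, X t j * θhat j) ^ 2)
          + lam * ∑ j, |θhat j|
        ≤ (1 / (2 * (T : ℝ))) * (∑ t, (Y t - ∑ j, X t j * θ j) ^ 2)
          + lam * ∑ j, |θ j|)
    -- `Z ⊆ {0,1}^m` is a nonempty finite set of indicator vectors
    (Z : Set (Fin m → ℝ))
    (hZ01 : ∀ z ∈ Z, ∀ j, z j = 0 ∨ z j = 1)
    -- `zstar` maximizes `zᵀθ*` over `Z`
    (zstar : Fin m → ℝ) (hzstarZ : zstar ∈ Z)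
    -- `zhat` maximizes `zᵀθ̂` over `Z`
    (zhat : Fin m → ℝ) (hzhatZ : zhat ∈ Z)
    (hzhat : ∀ z ∈ Z, (∑ j, z j * θhat j) ≤ ∑ j, zhat j * θhat j) :
    (∑ j, zstar j * θstar j) - (∑ j, zhat j * θstar j)
        ≤ 2 * ∑ j, |θhat j - θstar j| ∧
    2 * (∑ j, |θhat j - θstar j|) ≤ 48 * lam * K / κstar ^ 2 := by
  have h01 {z : Fin m → ℝ} (hz : z ∈ Z) (j : Fin m) : |z j| ≤ 1 := by
    rcases hZ01 z hz j with h | h <;> simp [h]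
  have hsupp (j : Fin m) (hj : j ∉ Sstar) : θstar j = 0 := not_not.mp (mt (hSstar j).mpr hj)
  have hl1 := lasso_sum_abs_sub_le (by exact_mod_cast hT) hlam hκ hRE (funext hY) hsupp
    hnoise (hmin θstar)
  refine ⟨welfare_gap_le_two_mul_sum_abs_sub (h01 hzstarZ) (h01 hzhatZ) (hzhat zstar hzstarZ), ?_⟩
  have hscale : 0 ≤ lam * K / κstar ^ 2 := by positivity
  rw [hcard] at hl1
  linarith [show 12 * lam * K / κstar ^ 2 = 12 * (lam * K / κstar ^ 2) by ring,
    show 48 * lam * K / κstar ^ 2 = 48 * (lam * K / κstar ^ 2) by ring]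

theorem stmt16
    (T m K : ℕ) (hT : 0 < T)
    (X : Matrix (Fin T) (Fin m) ℝ)
    (θstar : Fin m → ℝ) (ε Y : Fin T → ℝ)
    (hY : ∀ t, Y t = (∑ j, X t j * θstar j) + ε t)
    (Sstar : Finset (Fin m)) (hSstar : ∀ j, j ∈ Sstar ↔ θstar j ≠ 0)
    (hcard : Sstar.card = K)
    (lam : ℝ) (hlam : 0 < lam)
    (κstar : ℝ) (hκ : 0 < κstar)
    -- restricted eigenvalue condition `κ(S*, 3) ≥ κ*`
    (hRE : ∀ u : Fin m → ℝ,
      (∑ j ∈ Sstarᶜ, |u j|) ≤ 3 * ∑ j ∈ Sstar, |u j| →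
      κstar * Real.sqrt (T : ℝ) * Real.sqrt (∑ j ∈ Sstar, u j ^ 2)
        ≤ Real.sqrt (∑ t, (∑ j, X t j * u j) ^ 2))
    -- noise condition `‖(1/T) Xᵀε‖_∞ ≤ λ/2`
    (hnoise : ∀ j, |(1 / (T : ℝ)) * ∑ t, X t j * ε t| ≤ lam / 2)
    (θhat : Fin m → ℝ)
    -- `θhat` is a minimizer of the Lasso objective
    (hmin : ∀ θ : Fin m → ℝ,
      (1 / (2 * (T : ℝ))) * (∑ t, (Y t - ∑ j, X t j * θhat j) ^ 2)
          + lam * ∑ j, |θhat j|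
        ≤ (1 / (2 * (T : ℝ))) * (∑ t, (Y t - ∑ j, X t j * θ j) ^ 2)
          + lam * ∑ j, |θ j|)
    -- `Z ⊆ {0,1}^m` is a nonempty finite set of indicator vectors
    (Z : Set (Fin m → ℝ)) (hZfin : Z.Finite) (hZne : Z.Nonempty)
    (hZ01 : ∀ z ∈ Z, ∀ j, z j = 0 ∨ z j = 1)
    -- `zstar` maximizes `zᵀθ*` over `Z`
    (zstar : Fin m → ℝ) (hzstarZ : zstar ∈ Z)
    (hzstar : ∀ z ∈ Z, (∑ j, z j * θstar j) ≤ ∑ j, zstar j * θstar j)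
    -- `zhat` maximizes `zᵀθ̂` over `Z`
    (zhat : Fin m → ℝ) (hzhatZ : zhat ∈ Z)
    (hzhat : ∀ z ∈ Z, (∑ j, z j * θhat j) ≤ ∑ j, zhat j * θhat j) :
    (∑ j, zstar j * θstar j) - (∑ j, zhat j * θstar j)
        ≤ 2 * ∑ j, |θhat j - θstar j| ∧
    2 * (∑ j, |θhat j - θstar j|) ≤ 48 * lam * K / κstar ^ 2 :=
  stmt16_general T m K hT X θstar ε Y hY Sstar hSstar hcard lam hlam κstar hκ hRE hnoise θhat hmin Z
    hZ01 zstar hzstarZ zhat hzhatZ hzhat
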